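/- arXiv:1904.05018 — 5 statements merged into one kernel-verified Lean document; each statement's English description precedes it below -/
import Mathlib

section
/- Let f : ℝ → ℝ be an additive function such that f(x) = −x² · f(1/x) for all x ≠ 0. Then f is a derivation, i.e., f(xy) = x f(y) + y f(x) for all x, y ∈ ℝ. -/
theorem additive_inv_relation_is_derivation (f : ℝ → ℝ)
    (hadd : ∀ x y : ℝ, f (x + y) = f x + f y)
    (hinv : ∀ x : ℝ, x ≠ 0 → f x = -x ^ 2 * f (1 / x)) :
    ∀ x y : ℝ, f (x * y) = x * f y + y * f x := by
  have f0 : f 0 = 0 := by have := hadd 0 0; simp at this; linarith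
  have fneg : ∀ x : ℝ, f (-x) = -f x := by
    intro x; have := hadd x (-x); simp [f0] at this; linarith
  have fsub : ∀ x y : ℝ, f (x - y) = f x - f y := by
    intro x y; have := hadd (x - y) y; simp at this; linarith
  have f1 : f 1 = 0 := by have := hinv 1 one_ne_zero; simp at this; linarith
  have hsq : ∀ x : ℝ, f (x ^ 2) = 2 * x * f x := by
    intro x
    rcases eq_or_ne x 0 with rfl | hx0
    · simp [f0]
    rcases eq_or_ne x (-1) with rfl | hx1
    · have : f ((-1 : ℝ)) = - f 1 := by simpa using fneg 1
      norm_num [f1, this]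
    have hx1' : x + 1 ≠ 0 := fun h => hx1 (by linarith)
    have hprod : x * (x + 1) ≠ 0 := mul_ne_zero hx0 hx1'
    have e1 : (1 : ℝ) / (x * (x + 1)) = 1 / x - 1 / (x + 1) := by
      field_simp
      ring
    have h2 : f (1 / (x * (x + 1))) = f (1 / x) - f (1 / (x + 1)) := by
      rw [e1, fsub]
    have h3 := hinv (x * (x + 1)) hprod
    have h4 := hinv x hx0
    have h5 := hinv (x + 1) hx1'
    have h6 : f (x * (x + 1)) = f (x ^ 2) + f x := by
      have : x * (x + 1) = x ^ 2 + x := by ring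
      rw [this, hadd]
    have h7 : f (x + 1) = f x := by rw [hadd, f1, add_zero]
    -- from h3: f(x^2)+f x = -(x(x+1))^2 * f(1/(x(x+1)))
    rw [h6, h2] at h3
    -- express f(1/x), f(1/(x+1)) in terms of f x
    have hfx : f (1 / x) = -f x / x ^ 2 := by
      rw [h4]; field_simp
    have hfx1 : f (1 / (x + 1)) = -f x / (x + 1) ^ 2 := by
      rw [h7] at h5; rw [h5]; field_simp
    rw [hfx, hfx1] at h3
    have hx2 : x ^ 2 ≠ 0 := pow_ne_zero _ hx0
    have hx12 : (x + 1) ^ 2 ≠ 0 := pow_ne_zero _ hx1'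
    field_simp at h3
    have hpos : x ^ 2 * (x + 1) ^ 2 ≠ 0 := mul_ne_zero hx2 hx12
    apply mul_right_cancel₀ hpos
    linear_combination (x ^ 2 * (x + 1) ^ 2) * h3
  intro x y
  have h := hsq (x + y)
  have e : (x + y) ^ 2 = x ^ 2 + (x * y + x * y) + y ^ 2 := by ring
  rw [e, hadd, hadd, hadd, hsq, hsq, hadd] at h
  linarith
end

section
/- Let f : ℝ → ℝ be additive with f(1) = f(−1) = 0 and suppose f(x²) = 2x f(x) for all x ∈ ℝ. Then f satisfies the Leibniz rule f(xy) = x f(y) + y f(x) for all x, y ∈ ℝ. -/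
theorem additive_square_relation_leibniz (f : ℝ → ℝ)
    (hadd : ∀ x y : ℝ, f (x + y) = f x + f y)
    (h1 : f 1 = 0) (hm1 : f (-1) = 0)
    (hsq : ∀ x : ℝ, f (x ^ 2) = 2 * x * f x) :
    ∀ x y : ℝ, f (x * y) = x * f y + y * f x := by
  intro x y
  have key := hsq (x + y)
  have e1 : (x + y) ^ 2 = x ^ 2 + (x * y + x * y + y ^ 2) := by ring
  rw [e1, hadd, hadd, hadd, hsq, hsq] at key
  rw [hadd x y] at key
  nlinarith [key]
end

section
/- Let f, g : ℝ → ℝ be additive functions satisfying g(x) = x² f(1/x) for all x ≠ 0. Then f + g is a continuous (indeed linear) function, and the functions F(x) = f(x) − x f(1) and G(x) = g(x) − x g(1) are derivations with G = −F. -/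
private lemma aux_sq (f g : ℝ → ℝ)
    (hf : ∀ x y : ℝ, f (x + y) = f x + f y)
    (hg : ∀ x y : ℝ, g (x + y) = g x + g y)
    (hrel : ∀ x : ℝ, x ≠ 0 → g x = x ^ 2 * f (1 / x)) :
    ∀ t : ℝ, g (t ^ 2) = 2 * t * g t - t ^ 2 * g 1 := by
  have hg0 : g 0 = 0 := by have := hg 0 0; simp at this; linarith
  have hgneg : ∀ x : ℝ, g (-x) = - g x := by
    intro x
    have h := hg x (-x)
    rw [add_neg_cancel, hg0] at h
    linarith
  -- main case: t ≠ 0 and t ≠ -1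
  have key : ∀ t : ℝ, t ≠ 0 → t + 1 ≠ 0 → g (t ^ 2) = 2 * t * g t - t ^ 2 * g 1 := by
    intro t ht ht1
    have htt1 : t * (t + 1) ≠ 0 := mul_ne_zero ht ht1
    have e1 : (1 : ℝ) / t = 1 / (t + 1) + 1 / (t * (t + 1)) := by
      field_simp
    have e2 : f (1 / t) = f (1 / (t + 1)) + f (1 / (t * (t + 1))) := by
      rw [e1, hf]
    have r1 : g t = t ^ 2 * f (1 / t) := hrel t ht
    have r2 : g (t + 1) = (t + 1) ^ 2 * f (1 / (t + 1)) := hrel (t + 1) ht1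
    have r3 : g (t * (t + 1)) = (t * (t + 1)) ^ 2 * f (1 / (t * (t + 1))) :=
      hrel (t * (t + 1)) htt1
    have r4 : g (t * (t + 1)) = g (t ^ 2) + g t := by
      have : t * (t + 1) = t ^ 2 + t := by ring
      rw [this, hg]
    have r5 : g (t + 1) = g t + g 1 := hg t 1
    -- combine
    have e2' : f (1 / (t * (t + 1))) = f (1 / t) - f (1 / (t + 1)) := by linarith
    have A : g (t ^ 2) + g t = (t * (t + 1)) ^ 2 * (f (1 / t) - f (1 / (t + 1))) := by
      rw [← e2', ← r3, r4]
    have B : t ^ 2 * f (1 / t) = g t := r1.symm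
    have C : (t + 1) ^ 2 * f (1 / (t + 1)) = g t + g 1 := by rw [← r2]; exact r5
    linear_combination A + (t + 1) ^ 2 * B - t ^ 2 * C
  intro t
  by_cases ht : t = 0
  · subst ht; simpa using hg0
  by_cases ht1 : t + 1 ≠ 0
  · exact key t ht ht1
  · -- t = -1
    push_neg at ht1
    have ht' : t = -1 := by linarith
    subst ht'
    have : g ((-1 : ℝ) ^ 2) = g 1 := by norm_num
    rw [this]
    have hneg1 : g (-1) = - g 1 := by simpa using hgneg 1
    rw [hneg1]; ring

private lemma aux_der (g : ℝ → ℝ)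
    (hg : ∀ x y : ℝ, g (x + y) = g x + g y)
    (hsq : ∀ t : ℝ, g (t ^ 2) = 2 * t * g t - t ^ 2 * g 1) :
    ∀ x y : ℝ, g (x * y) = x * g y + y * g x - x * y * g 1 := by
  intro x y
  have e1 : g ((x + y) ^ 2) = g (x ^ 2) + 2 * g (x * y) + g (y ^ 2) := by
    have h : (x + y) ^ 2 = x ^ 2 + (x * y + (x * y + y ^ 2)) := by ring
    rw [h, hg, hg, hg]; ring
  have e2 := hsq (x + y)
  have e3 := hsq x
  have e4 := hsq y
  have e5 : g (x + y) = g x + g y := hg x y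
  linear_combination (e2 - e1 - e3 - e4) / 2 + (x + y) * e5

theorem additive_pair_inv_relation (f g : ℝ → ℝ)
    (hf : ∀ x y : ℝ, f (x + y) = f x + f y)
    (hg : ∀ x y : ℝ, g (x + y) = g x + g y)
    (hrel : ∀ x : ℝ, x ≠ 0 → g x = x ^ 2 * f (1 / x)) :
    (∀ x : ℝ, f x + g x = (f 1 + g 1) * x) ∧
    (∀ x y : ℝ, (f (x * y) - x * y * f 1)
        = x * (f y - y * f 1) + y * (f x - x * f 1)) ∧
    (∀ x y : ℝ, (g (x * y) - x * y * g 1)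
        = x * (g y - y * g 1) + y * (g x - x * g 1)) ∧
    (∀ x : ℝ, g x - x * g 1 = -(f x - x * f 1)) := by
  have hf0 : f 0 = 0 := by have := hf 0 0; simp at this; linarith
  have hg0 : g 0 = 0 := by have := hg 0 0; simp at this; linarith
  -- symmetric relation
  have hrel' : ∀ x : ℝ, x ≠ 0 → f x = x ^ 2 * g (1 / x) := by
    intro x hx
    have hx' : (1 : ℝ) / x ≠ 0 := one_div_ne_zero hx
    have h := hrel (1 / x) hx'
    rw [one_div_one_div] at h
    rw [h]
    field_simp
  have hg1 : g 1 = f 1 := by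
    have := hrel 1 one_ne_zero
    simpa using this
  have hsqg := aux_sq f g hf hg hrel
  have hsqf := aux_sq g f hg hf hrel'
  have hderg := aux_der g hg hsqg
  have hderf := aux_der f hf hsqf
  -- f x + g x = 2 x f 1 for all x
  have hsum : ∀ x : ℝ, f x + g x = 2 * x * f 1 := by
    intro x
    by_cases hx : x = 0
    · subst hx; simp [hf0, hg0]
    · have h1 := hrel x hx
      have h2 := hderf x (1 / x)
      rw [mul_one_div_cancel hx] at h2
      have hx2 : (x : ℝ) ^ 2 ≠ 0 := pow_ne_zero _ hx
      -- from h2: f 1 = x * f (1/x) + (1/x) * f x - 1 * f 1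
      have h3 : x * f (1 / x) = 2 * f 1 - (1 / x) * f x := by linarith
      have h4 : g x = x * (x * f (1 / x)) := by rw [h1]; ring
      rw [h3] at h4
      field_simp at h4
      linarith
  refine ⟨?_, ?_, ?_, ?_⟩
  · intro x
    rw [hg1, hsum x]; ring
  · intro x y
    have := hderf x y; linarith
  · intro x y
    have := hderg x y; linarith
  · intro x
    have h := hsum x
    rw [hg1]
    linarith
end

section
/- Let 𝔽 be a field, X a vector space over 𝔽, λ, μ ∈ 𝔽 nonzero. A function f : 𝔽 → X is a derivation (additive and f(xy) = x f(y) + y f(x)) if and only if λ[f(x+y) − f(x) − f(y)] + μ[f(xy) − x f(y) − y f(x)] = 0 for all x, y ∈ 𝔽. -/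
theorem derivation_single_equation {F X : Type*} [Field F]
    [AddCommGroup X] [Module F X] (lam mu : F) (hlam : lam ≠ 0) (hmu : mu ≠ 0)
    (f : F → X) :
    ((∀ x y : F, f (x + y) = f x + f y) ∧
     (∀ x y : F, f (x * y) = x • f y + y • f x)) ↔
    (∀ x y : F, lam • (f (x + y) - f x - f y)
        + mu • (f (x * y) - x • f y - y • f x) = 0) := by
  constructor
  · rintro ⟨ha, hm⟩ x y
    rw [ha x y, hm x y]
    module
  · intro h
    have h0 : f 0 = 0 := by
      have e := h 1 0
      rw [add_zero, mul_zero] at e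
      have e2 : lam • f 0 = lam • (0 : X) := by
        linear_combination (norm := module) -e
      exact smul_right_injective X hlam e2
    have key1 : ∀ x : F, lam • f (x + 1) = lam • f x + lam • f 1 + (mu * x) • f 1 := by
      intro x
      have e := h x 1
      rw [mul_one] at e
      linear_combination (norm := module) e
    have keyH : ∀ x y : F, (lam * mu) • f (x * y + y)
        = (lam * mu) • f (x * y) + (lam * mu) • f y + (mu * mu * x * y) • f 1 := by
      intro x y
      have e1 := h (x + 1) y
      rw [show x + 1 + y = x + y + 1 from by ring,
          show (x + 1) * y = x * y + y from by ring] at e1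
      have e2 := h x y
      linear_combination (norm := module)
        lam • e1 - lam • e2 + (lam + mu * y) • key1 x - lam • key1 (x + y)
    have hf1 : f 1 = 0 := by
      by_cases h2 : (2 : F) = 0
      · have e := keyH 1 1
        rw [one_mul, show (1 : F) + 1 = 0 from by rw [one_add_one_eq_two]; exact h2,
            h0, smul_zero] at e
        have e2 : (mu * mu) • f 1 = (0 : X) := by
          have hc : lam * mu + lam * mu + mu * mu * 1 * 1 = mu * mu := by
            linear_combination (lam * mu) * h2
          calc (mu * mu) • f 1
              = (lam * mu + lam * mu + mu * mu * 1 * 1) • f 1 := by rw [hc]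
            _ = (lam * mu) • f 1 + (lam * mu) • f 1 + (mu * mu * 1 * 1) • f 1 := by
                rw [add_smul, add_smul]
            _ = 0 := e.symm
        rcases smul_eq_zero.mp e2 with h' | h'
        · exact absurd h' (mul_ne_zero hmu hmu)
        · exact h'
      · have e3 := keyH 2 1
        rw [mul_one, show (2 : F) + 1 = 3 from by norm_num] at e3
        have e4 := keyH 2⁻¹ 2
        rw [inv_mul_cancel₀ h2, show (1 : F) + 2 = 3 from by norm_num] at e4
        have e5 : (mu * mu) • f 1 = (0 : X) := by
          have hc : mu * mu * 2⁻¹ * 2 = mu * mu := by field_simp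
          rw [hc] at e4
          linear_combination (norm := module) e4 - e3
        rcases smul_eq_zero.mp e5 with h' | h'
        · exact absurd h' (mul_ne_zero hmu hmu)
        · exact h'
    have hadd : ∀ x y : F, f (x + y) = f x + f y := by
      intro x y
      by_cases hy : y = 0
      · subst hy; rw [add_zero, h0, add_zero]
      · have e := keyH (x * y⁻¹) y
        rw [hf1, smul_zero, add_zero, show x * y⁻¹ * y = x from by field_simp] at e
        have e2 : (lam * mu) • f (x + y) = (lam * mu) • (f x + f y) := by
          rw [smul_add]; exact e
        exact smul_right_injective X (mul_ne_zero hlam hmu) e2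
    refine ⟨hadd, fun x y => ?_⟩
    have e := h x y
    rw [hadd x y] at e
    have e2 : mu • f (x * y) = mu • (x • f y + y • f x) := by
      linear_combination (norm := module) e
    exact smul_right_injective X hmu e2
end

section
/- Let d : ℝ → ℝ be a derivation and n ∈ ℕ. If there exist c₀, c₁, …, cₙ ∈ ℝ, not all zero, with c₀x + c₁d(x) + ⋯ + cₙdⁿ(x) = 0 for all x ∈ ℝ (where dᵏ denotes the k-th iterate of d and d⁰ = id), then d = 0. Equivalently, for a nonzero derivation d, the functions id, d, d², …, dⁿ are linearly independent over ℝ. -/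
open Finset

theorem my_iter_leibniz (d : ℝ → ℝ)
    (hadd : ∀ x y : ℝ, d (x + y) = d x + d y)
    (hleib : ∀ x y : ℝ, d (x * y) = x * d y + y * d x) :
    ∀ (k : ℕ) (x y : ℝ),
      d^[k] (x * y) = ∑ j ∈ range (k + 1),
        (k.choose j : ℝ) * (d^[j] x * d^[k - j] y) := by
  have h1 : d 1 = 0 := by have := hleib 1 1; simp at this; linarith
  have h0 : d 0 = 0 := by have := hadd 0 0; simp at this; linarith
  have hnat : ∀ (a : ℕ), d (a : ℝ) = 0 := by
    intro a
    induction a with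
    | zero => simpa using h0
    | succ a ih => push_cast; rw [hadd, ih, h1]; ring
  have hconst : ∀ (a : ℕ) (w : ℝ), d ((a : ℝ) * w) = (a : ℝ) * d w := by
    intro a w; rw [hleib, hnat]; ring
  have hD : ∀ (s : Finset ℕ) (g : ℕ → ℝ), d (∑ i ∈ s, g i) = ∑ i ∈ s, d (g i) := by
    intro s g
    exact map_sum (AddMonoidHom.mk' d hadd) g s
  intro k
  induction k with
  | zero => intro x y; simp
  | succ k ih =>
    intro x y
    rw [Function.iterate_succ_apply', ih, hD]
    have step : ∀ j ∈ range (k+1),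
        d ((k.choose j : ℝ) * (d^[j] x * d^[k - j] y))
          = (k.choose j : ℝ) * (d^[j] x * d^[k + 1 - j] y)
            + (k.choose j : ℝ) * (d^[j + 1] x * d^[k - j] y) := by
      intro j hj
      simp only [mem_range] at hj
      rw [hconst, hleib]
      have e1 : d (d^[k - j] y) = d^[k + 1 - j] y := by
        rw [← Function.iterate_succ_apply' d (k - j) y]
        congr 1
        omega
      have e2 : d (d^[j] x) = d^[j + 1] x := (Function.iterate_succ_apply' d j x).symm
      rw [e1, e2]
      ring
    rw [Finset.sum_congr rfl step]
    rw [Finset.sum_add_distrib]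
    -- now: ∑_{j≤k} C(k,j)*(d^j x * ...) style; combine into target
    have S1 : ∑ j ∈ range (k + 1), (k.choose j : ℝ) * (d^[j] x * d^[k + 1 - j] y)
        = (∑ j ∈ range k, (k.choose (j+1) : ℝ) * (d^[j+1] x * d^[k - j] y))
          + d^[0] x * d^[k+1] y := by
      rw [Finset.sum_range_succ']
      congr 1
      · apply Finset.sum_congr rfl
        intro j hj
        simp only [mem_range] at hj
        have : k + 1 - (j + 1) = k - j := by omega
        rw [this]
      · simp
    have S2 : ∑ j ∈ range (k + 2), ((k+1).choose j : ℝ) * (d^[j] x * d^[k + 1 - j] y)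
        = (∑ j ∈ range (k+1), ((k.choose j : ℝ) + (k.choose (j+1) : ℝ)) * (d^[j+1] x * d^[k - j] y))
          + d^[0] x * d^[k+1] y := by
      rw [Finset.sum_range_succ']
      congr 1
      · apply Finset.sum_congr rfl
        intro j hj
        simp only [mem_range] at hj
        have h3 : k + 1 - (j + 1) = k - j := by omega
        rw [h3, Nat.choose_succ_succ]
        push_cast
        ring
      · simp
    have S3 : ∑ j ∈ range (k+1), (k.choose (j+1) : ℝ) * (d^[j+1] x * d^[k - j] y)
        = ∑ j ∈ range k, (k.choose (j+1) : ℝ) * (d^[j+1] x * d^[k - j] y) := by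
      rw [Finset.sum_range_succ]
      simp
    rw [S2, Finset.sum_congr rfl (fun j _ => by ring :
      ∀ j ∈ range (k+1), ((k.choose j : ℝ) + (k.choose (j+1) : ℝ)) * (d^[j+1] x * d^[k - j] y)
        = (k.choose j : ℝ) * (d^[j+1] x * d^[k - j] y) + (k.choose (j+1) : ℝ) * (d^[j+1] x * d^[k - j] y)),
      Finset.sum_add_distrib, S1, S3]
    ring


theorem iterates_linear_dependence_implies_zero (d : ℝ → ℝ)
    (hadd : ∀ x y : ℝ, d (x + y) = d x + d y)
    (hleib : ∀ x y : ℝ, d (x * y) = x * d y + y * d x)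
    (n : ℕ) (c : Fin (n + 1) → ℝ) (hc : ∃ i, c i ≠ 0)
    (heq : ∀ x : ℝ, ∑ i : Fin (n + 1), c i * d^[(i : ℕ)] x = 0) :
    ∀ x : ℝ, d x = 0 := by
  have h1 : d 1 = 0 := by have := hleib 1 1; simp at this; linarith
  have leib := my_iter_leibniz d hadd hleib
  -- Property: there is a relation of length m with nonzero top coefficient
  set Q : ℕ → Prop := fun m => ∃ b : ℕ → ℝ, b m ≠ 0 ∧
      ∀ x : ℝ, ∑ i ∈ range (m + 1), b i * d^[i] x = 0 with hQdef
  -- extend c by zero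
  have hQex : ∃ m, Q m := by
    set b : ℕ → ℝ := fun i => if h : i < n + 1 then c ⟨i, h⟩ else 0 with hbdef
    have hbrel : ∀ x : ℝ, ∑ i ∈ range (n + 1), b i * d^[i] x = 0 := by
      intro x
      rw [← Fin.sum_univ_eq_sum_range (fun i => b i * d^[i] x) (n + 1)]
      rw [← heq x]
      apply Finset.sum_congr rfl
      intro i _
      simp [hbdef, i.isLt, Nat.lt_succ_iff.mp i.isLt, Nat.not_lt.mpr (Nat.lt_succ_iff.mp i.isLt)]
    obtain ⟨i0, hi0⟩ := hc
    set S : Finset ℕ := (range (n + 1)).filter (fun i => b i ≠ 0) with hSdef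
    have hSne : S.Nonempty := by
      refine ⟨(i0 : ℕ), ?_⟩
      simp only [hSdef, mem_filter, mem_range]
      refine ⟨i0.isLt, ?_⟩
      simpa [hbdef, i0.isLt, Nat.lt_succ_iff.mp i0.isLt] using hi0
    set m := S.max' hSne with hm
    have hmS : m ∈ S := S.max'_mem hSne
    have hmn : m < n + 1 := by
      have := (mem_filter.mp hmS).1; simpa using this
    refine ⟨m, b, (mem_filter.mp hmS).2, ?_⟩
    intro x
    rw [← hbrel x]
    apply Finset.sum_subset
    · exact Finset.range_subset_range.mpr hmn
    · intro i hi hni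
      simp only [mem_range] at hi hni
      have : b i = 0 := by
        by_contra hbi
        have : i ∈ S := by simp [hSdef, mem_filter, mem_range, hi, hbi]
        have := S.le_max' i this
        omega
      rw [this]; ring
  by_contra hcon
  push_neg at hcon
  obtain ⟨y, hy⟩ := hcon
  classical
  set m0 := Nat.find hQex with hm0
  obtain ⟨b, hbtop, hbrel⟩ : Q m0 := Nat.find_spec hQex
  -- m0 ≠ 0
  have hne0 : m0 ≠ 0 := by
    intro h
    have e := hbrel 1
    rw [h] at e
    simp at e
    rw [h] at hbtop
    exact hbtop e
  -- m0 ≠ 1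
  have hne1 : m0 ≠ 1 := by
    intro h
    rw [h] at hbrel hbtop
    have e1 := hbrel 1
    simp [Finset.sum_range_succ, h1] at e1
    have e2 := hbrel y
    simp [Finset.sum_range_succ, e1] at e2
    rcases e2 with e2 | e2
    · exact hbtop e2
    · exact hy e2
  have hm2 : 2 ≤ m0 := by omega
  -- Build the shorter relation
  set a : ℕ → ℝ := fun j =>
    (∑ k ∈ Ico j (m0 + 1), b k * (k.choose j : ℝ) * d^[k - j] y) - b j * y with hadef
  -- key: for all x, ∑_{j ∈ range (m0+1)} (a j + b j * y) * d^[j] x = 0 via Leibniz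
  have key : ∀ x : ℝ, ∑ j ∈ range (m0 + 1),
      (∑ k ∈ Ico j (m0 + 1), b k * (k.choose j : ℝ) * d^[k - j] y) * d^[j] x = 0 := by
    intro x
    have T := hbrel (x * y)
    have T2 : ∑ k ∈ range (m0 + 1), ∑ j ∈ range (k + 1),
        b k * (k.choose j : ℝ) * d^[k - j] y * d^[j] x = 0 := by
      rw [← T]
      apply Finset.sum_congr rfl
      intro k _
      rw [leib k x y, Finset.mul_sum]
      apply Finset.sum_congr rfl
      intro j _
      ring
    rw [← T2]
    rw [Finset.sum_comm' (s := range (m0 + 1)) (t := fun k => range (k + 1))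
      (t' := range (m0 + 1)) (s' := fun j => Ico j (m0 + 1))
      (f := fun k j => b k * (k.choose j : ℝ) * d^[k - j] y * d^[j] x) ?_]
    · apply Finset.sum_congr rfl
      intro j _
      rw [Finset.sum_mul]
    · intro k j
      simp only [mem_range, mem_Ico]
      omega
  have arel : ∀ x : ℝ, ∑ j ∈ range ((m0 - 1) + 1), a j * d^[j] x = 0 := by
    intro x
    have h1' : (m0 - 1) + 1 = m0 := by omega
    rw [h1']
    have sum0 : ∑ j ∈ range (m0 + 1), a j * d^[j] x = 0 := by
      have expand : ∀ j ∈ range (m0 + 1), a j * d^[j] x =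
          (∑ k ∈ Ico j (m0 + 1), b k * (k.choose j : ℝ) * d^[k - j] y) * d^[j] x
            - y * (b j * d^[j] x) := by
        intro j _
        simp only [hadef]
        ring
      rw [Finset.sum_congr rfl expand, Finset.sum_sub_distrib, key x, ← Finset.mul_sum,
        hbrel x]
      ring
    have alast : a m0 = 0 := by
      simp only [hadef]
      rw [Nat.Ico_succ_singleton, Finset.sum_singleton]
      simp
    rw [Finset.sum_range_succ, alast, zero_mul, add_zero] at sum0
    exact sum0
  obtain ⟨p, hp⟩ : ∃ p, m0 = p + 2 := ⟨m0 - 2, by omega⟩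
  have atop : a (m0 - 1) ≠ 0 := by
    have e : m0 - 1 = p + 1 := by omega
    rw [e]
    have aval : a (p + 1) = b (p + 2) * ((p + 2 : ℕ) : ℝ) * d y := by
      simp only [hadef]
      have hIco : Ico (p + 1) (m0 + 1) = {p + 1, p + 2} := by
        ext t
        simp only [mem_Ico, mem_insert, mem_singleton, hp]
        omega
      rw [hIco, Finset.sum_insert (by simp), Finset.sum_singleton]
      have hc1 : (p + 1).choose (p + 1) = 1 := Nat.choose_self _
      have hc2 : (p + 2).choose (p + 1) = p + 2 := Nat.choose_succ_self_right _
      have hs1 : p + 1 - (p + 1) = 0 := by omega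
      have hs2 : p + 2 - (p + 1) = 1 := by omega
      rw [hc1, hc2, hs1, hs2]
      simp only [Function.iterate_zero, Function.iterate_one, id_eq]
      ring
    rw [aval]
    rw [hp] at hbtop
    apply mul_ne_zero (mul_ne_zero hbtop ?_) hy
    exact_mod_cast Nat.succ_ne_zero (p + 1)
  have hQsmall : Q (m0 - 1) := ⟨a, atop, arel⟩
  exact Nat.find_min hQex (show m0 - 1 < m0 by omega) hQsmall
end
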